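/- Let M > 1, n ≥ 1 a natural number, v ≥ 0 with (n−1)·M·v ≤ (M−1)·n, and let α be any real number with 1/M ≤ α < 1. Then the quadratic q (in the variable β, with parameters M, n, v, α) evaluated at β = (M+1)/(2M) equals ((M−1)²n/(4M))·((M−1)²n + (n−1)(M+1)²v)·(1 + M + (M−1)α), and this value is strictly positive. -/

import Mathlib

/-- The quadratic `q(β)` (in `β`, with parameters `M, n, v, α`) from the
two-step stochastic stepsize schedule analysis. -/
noncomputable def qquad (M n v α β : ℝ) : ℝ :=
  M * n * ((M - 1) ^ 2 * n + (M + 1) ^ 2 * (n - 1) * v) * ((M - 1) * α + (M + 1)) * β ^ 2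
  + 2 * M * (2 * (M - 1) * M * n * ((n - 1) * v - n) * α ^ 2
      + (M + 1) * ((n - 1) * v - n) * ((3 - M) * n + (M - 1) * (n - 1) * v) * α
      + n * (n - (M - 4) * M * n - (M + 1) * (M + 3) * (n - 1) * v)) * β
  + (-2 * M * (M ^ 2 - 1) * n * ((n - 1) * v - n) * α ^ 2
      + (2 * (2 + M + 2 * M ^ 2 - M ^ 3) * n ^ 2 + (M - 3) * (M + 1) ^ 2 * (n - 1) * n * v
          - (M - 1) * (M + 1) ^ 2 * (n - 1) ^ 2 * v ^ 2) * α
      + 2 * (M + 1) ^ 2 * n * ((n - 1) * v - n))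

theorem qquad_midpoint_eq (M n v α : ℝ) (hM : M ≠ 0) :
    qquad M n v α ((M + 1) / (2 * M))
      = (M - 1) ^ 2 * n / (4 * M) * ((M - 1) ^ 2 * n + (n - 1) * (M + 1) ^ 2 * v)
          * (1 + M + (M - 1) * α) := by
  unfold qquad
  field_simp
  ring

theorem qquad_midpoint_factors_pos {M n v α : ℝ} (hM : 1 < M) (hn : 1 ≤ n) (hv : 0 ≤ v)
    (hα : 0 < α) :
    0 < (M - 1) ^ 2 * n / (4 * M) * ((M - 1) ^ 2 * n + (n - 1) * (M + 1) ^ 2 * v)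
          * (1 + M + (M - 1) * α) := by
  have hM1 : 0 < M - 1 := sub_pos.mpr hM
  have hn1 : 0 ≤ n - 1 := sub_nonneg.mpr hn
  have hM0 : 0 < M := by linarith
  have hα' : 0 < (M - 1) * α := mul_pos hM1 hα
  have : 0 < 1 + M + (M - 1) * α := by linarith
  positivity

theorem stmt_5_general (M : ℝ) (n : ℕ) (v : ℝ)
    (hM : 1 < M) (hn : 1 ≤ n) (hv : 0 ≤ v)
    (α : ℝ) (hα : α ∈ Set.Ico (1 / M) 1) :
    qquad M (n : ℝ) v α ((M + 1) / (2 * M))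
        = (M - 1) ^ 2 * (n : ℝ) / (4 * M)
            * ((M - 1) ^ 2 * (n : ℝ) + ((n : ℝ) - 1) * (M + 1) ^ 2 * v)
            * (1 + M + (M - 1) * α) ∧
    0 < qquad M (n : ℝ) v α ((M + 1) / (2 * M)) := by
  have hval := qquad_midpoint_eq M n v α (by positivity)
  have hα0 : 0 < α := lt_of_lt_of_le (by positivity) hα.1
  exact ⟨hval, hval ▸ qquad_midpoint_factors_pos hM (by exact_mod_cast hn) hv hα0⟩

theorem stmt_5 (M : ℝ) (n : ℕ) (v : ℝ)
    (hM : 1 < M) (hn : 1 ≤ n) (hv : 0 ≤ v)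
    (hbound : ((n : ℝ) - 1) * M * v ≤ (M - 1) * n)
    (α : ℝ) (hα : α ∈ Set.Ico (1 / M) 1) :
    qquad M (n : ℝ) v α ((M + 1) / (2 * M))
        = (M - 1) ^ 2 * (n : ℝ) / (4 * M)
            * ((M - 1) ^ 2 * (n : ℝ) + ((n : ℝ) - 1) * (M + 1) ^ 2 * v)
            * (1 + M + (M - 1) * α) ∧
    0 < qquad M (n : ℝ) v α ((M + 1) / (2 * M)) :=
  stmt_5_general M n v hM hn hv α hα
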